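/- Let Φ be a ν-self-concordant barrier on the unit ball of ℓ_p^n with p > 2, let X₀ = 0 and X_i = X_{i-1} + (1/(2n^{1/p})) ξ_i e_i with ξ_i i.i.d. Rademacher. Then E[Φ(X_n)] − Φ(0) ≥ n · min(1/(64 n^{2/p}), 1/16), and consequently ν = Ω(n^{1−2/p}). -/

import Mathlib

/-! Each step of the walk moves a fresh coordinate `j` of a point `x` with `‖x‖_p ≤ 1/2` by `±t`,
where `t² = 1/(4 n^{2/p})`. Since `x + s e_j` leaves the ball for every `s > 1`, the Dikin ellipse
property forces `H(x)_{jj} ≥ 1`, and the Bregman bound applied to `±t e_j` then shows that the average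
of `Φ(x ± t e_j)` exceeds `Φ(x)` by at least `min(t²/4, 1/16)`. Summing over the `n` steps bounds
`E Φ(X_n) - Φ(0)` from below, while `‖X_n‖_p ≤ 1/2` lets the self-concordance bound cap the same
quantity by `ν log 2`. -/

open Matrix

noncomputable def pnorm {n : ℕ} (p : ℝ) (v : Fin n → ℝ) : ℝ :=
  (∑ i, |v i| ^ p) ^ (1 / p)

/-- The endpoint of the random walk with signs `ξ` and step size `1/(2 n^{1/p})`. -/
noncomputable def walkEnd (n : ℕ) (p : ℝ) (ξ : Fin n → Bool) : Fin n → ℝ :=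
  fun i => (if ξ i then (1 : ℝ) else -1) / (2 * (n : ℝ) ^ (1 / p : ℝ))

open Filter Topology

lemma one_lt_pnorm_of_one_lt_abs {n : ℕ} {p : ℝ} (hp : 0 < p) {v : Fin n → ℝ} (j : Fin n)
    (hj : 1 < |v j|) : 1 < pnorm p v := by
  have hsum : 1 < ∑ i, |v i| ^ p :=
    (Real.one_lt_rpow hj hp).trans_le
      (Finset.single_le_sum (f := fun i => |v i| ^ p) (fun i _ => by positivity)
        (Finset.mem_univ j))
  exact Real.one_lt_rpow hsum (by positivity)

lemma pnorm_le_of_abs_le {n : ℕ} {p : ℝ} (hp : 0 < p) {v : Fin n → ℝ} {c : ℝ} (hc : 0 ≤ c)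
    (hv : ∀ i, |v i| ≤ c) : pnorm p v ≤ (n : ℝ) ^ (1 / p) * c := by
  have hsum : ∑ i, |v i| ^ p ≤ n * c ^ p := by
    simpa using Finset.sum_le_card_nsmul Finset.univ (fun i => |v i| ^ p) (c ^ p)
      fun i _ => Real.rpow_le_rpow (abs_nonneg _) (hv i) hp.le
  calc pnorm p v ≤ (n * c ^ p) ^ (1 / p) :=
        Real.rpow_le_rpow (by positivity) hsum (by positivity)
    _ = (n : ℝ) ^ (1 / p) * c := by
        rw [Real.mul_rpow (by positivity) (by positivity), one_div,
          Real.rpow_rpow_inv hc hp.ne']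

lemma single_dotProduct_mulVec_single {n : ℕ} (A : Matrix (Fin n) (Fin n) ℝ) (j : Fin n)
    (t : ℝ) : Pi.single j t ⬝ᵥ A *ᵥ Pi.single j t = t ^ 2 * A j j := by
  simp only [mulVec_single, single_dotProduct, Pi.smul_apply, col_apply, op_smul_eq_mul]
  ring

lemma one_le_diag_of_dikin {n : ℕ} {p : ℝ} (hp : 0 < p) {A : Matrix (Fin n) (Fin n) ℝ}
    {x : Fin n → ℝ} {j : Fin n} (hxj : x j = 0)
    (hDikin : ∀ h, Real.sqrt (h ⬝ᵥ A *ᵥ h) < 1 → pnorm p (x + h) ≤ 1) : 1 ≤ A j j := by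
  have hle : ∀ t : ℝ, 1 < t → 1 ≤ t ^ 2 * A j j := by
    intro t ht
    by_contra! hlt
    have hin := hDikin (Pi.single j t) <| by
      rw [single_dotProduct_mulVec_single, Real.sqrt_lt' one_pos]; simpa using hlt
    have hout : 1 < pnorm p (x + Pi.single j t) :=
      one_lt_pnorm_of_one_lt_abs hp j (by simpa [hxj, abs_of_pos (one_pos.trans ht)] using ht)
    linarith
  have hlim : Tendsto (fun t : ℝ => t ^ 2 * A j j) (𝓝[>] 1) (𝓝 (A j j)) := by
    have : Continuous fun t : ℝ => t ^ 2 * A j j := by fun_prop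
    simpa using (this.tendsto 1).mono_left nhdsWithin_le_nhds
  exact ge_of_tendsto hlim (eventually_nhdsWithin_of_forall hle)

lemma two_mul_add_min_le_add_of_bregman {n : ℕ} {Φ : (Fin n → ℝ) → ℝ} {g : Fin n → ℝ}
    {A : Matrix (Fin n) (Fin n) ℝ} {x : Fin n → ℝ}
    (hBreg : ∀ h, Φ (x + h) - Φ x - g ⬝ᵥ h ≥ min ((1 / 4) * (h ⬝ᵥ A *ᵥ h)) (1 / 16))
    (h : Fin n → ℝ) :
    2 * Φ x + 2 * min ((1 / 4) * (h ⬝ᵥ A *ᵥ h)) (1 / 16) ≤ Φ (x + h) + Φ (x - h) := by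
  have hplus := hBreg h
  have hminus := hBreg (-h)
  simp only [mulVec_neg, dotProduct_neg, neg_dotProduct, neg_neg, ← sub_eq_add_neg] at hminus
  linarith

lemma two_mul_add_le_add_of_bregman_of_dikin {n : ℕ} {p : ℝ} (hp : 0 < p)
    {Φ : (Fin n → ℝ) → ℝ} {gΦ : (Fin n → ℝ) → (Fin n → ℝ)}
    {H : (Fin n → ℝ) → Matrix (Fin n) (Fin n) ℝ}
    (hBreg : ∀ x h : Fin n → ℝ, pnorm p x < 1 →
      Φ (x + h) - Φ x - gΦ x ⬝ᵥ h ≥ min ((1 / 4) * (h ⬝ᵥ (H x).mulVec h)) (1 / 16))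
    (hDikin : ∀ x h : Fin n → ℝ, pnorm p x < 1 →
      Real.sqrt (h ⬝ᵥ (H x).mulVec h) < 1 → pnorm p (x + h) ≤ 1)
    {x : Fin n → ℝ} (hx : pnorm p x < 1) {j : Fin n} (hxj : x j = 0) (t : ℝ) :
    2 * Φ x + 2 * min (t ^ 2 / 4) (1 / 16) ≤
      Φ (x + Pi.single j t) + Φ (x - Pi.single j t) := by
  have hdiag : 1 ≤ H x j j := one_le_diag_of_dikin hp hxj (hDikin x · hx)
  have hmin : min (t ^ 2 / 4) (1 / 16) ≤
      min ((1 / 4) * (Pi.single j t ⬝ᵥ H x *ᵥ Pi.single j t)) (1 / 16) := by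
    rw [single_dotProduct_mulVec_single]
    gcongr
    nlinarith [sq_nonneg t]
  linarith [two_mul_add_min_le_add_of_bregman (hBreg x · hx) (Pi.single j t)]

lemma sum_add_card_mul_le_sum_of_pairing {ι : Type*} [Fintype ι] {f g : ι → ℝ} {σ : ι → ι}
    (hσ : Function.Involutive σ) {δ : ℝ} (h : ∀ i, 2 * f i + 2 * δ ≤ g i + g (σ i)) :
    ∑ i, f i + Fintype.card ι * δ ≤ ∑ i, g i := by
  have hperm : ∑ i, g (σ i) = ∑ i, g i := Fintype.sum_bijective σ hσ.bijective _ _ fun _ => rfl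
  have := Finset.sum_le_sum fun i (_ : i ∈ Finset.univ) => h i
  simp only [Finset.sum_add_distrib, hperm, ← Finset.mul_sum, Finset.sum_const,
    Finset.card_univ, nsmul_eq_mul] at this
  linarith

def flipAt {n : ℕ} (j : Fin n) (ξ : Fin n → Bool) : Fin n → Bool :=
  Function.update ξ j (!ξ j)

lemma flipAt_involutive {n : ℕ} (j : Fin n) : Function.Involutive (flipAt j) := by
  intro ξ
  simp [flipAt]

/-- The paper's `X_k`. -/
noncomputable def partialWalk (n : ℕ) (p : ℝ) (k : ℕ) (ξ : Fin n → Bool) : Fin n → ℝ :=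
  fun i => if (i : ℕ) < k then walkEnd n p ξ i else 0

section partialWalk

variable {n : ℕ} {p : ℝ}

@[simp] lemma partialWalk_zero (ξ : Fin n → Bool) : partialWalk n p 0 ξ = 0 := by
  ext i
  simp [partialWalk]

@[simp] lemma partialWalk_self (ξ : Fin n → Bool) : partialWalk n p n ξ = walkEnd n p ξ := by
  ext i
  simp [partialWalk]

lemma partialWalk_apply_self {k : ℕ} (hk : k < n) (ξ : Fin n → Bool) :
    partialWalk n p k ξ ⟨k, hk⟩ = 0 := by
  simp [partialWalk]

lemma partialWalk_succ {k : ℕ} (hk : k < n) (ξ : Fin n → Bool) :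
    partialWalk n p (k + 1) ξ =
      partialWalk n p k ξ + Pi.single ⟨k, hk⟩ (walkEnd n p ξ ⟨k, hk⟩) := by
  ext i
  rcases lt_trichotomy (i : ℕ) k with hik | rfl | hik
  · simp [partialWalk, hik, hik.trans (Nat.lt_succ_self k),
      Pi.single_eq_of_ne (show i ≠ ⟨k, hk⟩ from Fin.ne_of_val_ne hik.ne)]
  · simp [partialWalk]
  · simp [partialWalk, hik.not_gt, (Nat.succ_le_of_lt hik).not_gt,
      Pi.single_eq_of_ne (show i ≠ ⟨k, hk⟩ from Fin.ne_of_val_ne hik.ne')]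

lemma partialWalk_flipAt {k : ℕ} (hk : k < n) (ξ : Fin n → Bool) :
    partialWalk n p k (flipAt ⟨k, hk⟩ ξ) = partialWalk n p k ξ := by
  ext i
  by_cases hik : (i : ℕ) < k
  · simp [partialWalk, walkEnd, flipAt, hik,
      Function.update_of_ne (show i ≠ ⟨k, hk⟩ from Fin.ne_of_val_ne hik.ne)]
  · simp [partialWalk, hik]

lemma walkEnd_flipAt_self (j : Fin n) (ξ : Fin n → Bool) :
    walkEnd n p (flipAt j ξ) j = -walkEnd n p ξ j := by
  cases h : ξ j <;> simp [walkEnd, flipAt, h, neg_div]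

lemma partialWalk_succ_flipAt {k : ℕ} (hk : k < n) (ξ : Fin n → Bool) :
    partialWalk n p (k + 1) (flipAt ⟨k, hk⟩ ξ) =
      partialWalk n p k ξ - Pi.single ⟨k, hk⟩ (walkEnd n p ξ ⟨k, hk⟩) := by
  rw [partialWalk_succ hk, partialWalk_flipAt, walkEnd_flipAt_self, Pi.single_neg,
    sub_eq_add_neg]

lemma abs_walkEnd (ξ : Fin n → Bool) (i : Fin n) :
    |walkEnd n p ξ i| = 1 / (2 * (n : ℝ) ^ (1 / p)) := by
  have : (0 : ℝ) < n := Nat.cast_pos.mpr i.pos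
  rw [walkEnd, abs_div, abs_of_pos (by positivity : (0 : ℝ) < 2 * (n : ℝ) ^ (1 / p))]
  cases ξ i <;> simp

lemma walkEnd_sq (ξ : Fin n → Bool) (i : Fin n) :
    walkEnd n p ξ i ^ 2 = 1 / (4 * (n : ℝ) ^ (2 / p)) := by
  rw [← sq_abs, abs_walkEnd, div_pow, mul_pow, ← Real.rpow_mul_natCast (Nat.cast_nonneg n)]
  ring_nf

lemma pnorm_partialWalk_le (hn : 0 < n) (hp : 0 < p) (k : ℕ) (ξ : Fin n → Bool) :
    pnorm p (partialWalk n p k ξ) ≤ 1 / 2 := by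
  have hc : (0 : ℝ) < (n : ℝ) ^ (1 / p) := by positivity
  calc pnorm p (partialWalk n p k ξ) ≤ (n : ℝ) ^ (1 / p) * (1 / (2 * (n : ℝ) ^ (1 / p))) := by
        refine pnorm_le_of_abs_le hp (by positivity) fun i => ?_
        unfold partialWalk
        split_ifs
        · exact (abs_walkEnd ξ i).le
        · rw [abs_zero]; positivity
    _ = 1 / 2 := by field_simp

lemma pow_mul_add_le_sum_partialWalk (F : (Fin n → ℝ) → ℝ) {δ : ℝ}
    (hstep : ∀ k (hk : k < n) ξ, 2 * F (partialWalk n p k ξ) + 2 * δ ≤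
      F (partialWalk n p k ξ + Pi.single ⟨k, hk⟩ (walkEnd n p ξ ⟨k, hk⟩)) +
        F (partialWalk n p k ξ - Pi.single ⟨k, hk⟩ (walkEnd n p ξ ⟨k, hk⟩)))
    {k : ℕ} (hk : k ≤ n) : 2 ^ n * (F 0 + k * δ) ≤ ∑ ξ, F (partialWalk n p k ξ) := by
  induction k with
  | zero => simp
  | succ k ih =>
    have hk' : k < n := hk
    have hpair := sum_add_card_mul_le_sum_of_pairing (flipAt_involutive ⟨k, hk'⟩)
      (f := fun ξ => F (partialWalk n p k ξ)) (g := fun ξ => F (partialWalk n p (k + 1) ξ))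
      (δ := δ) fun ξ => by
        rw [partialWalk_succ_flipAt hk', partialWalk_succ hk']
        exact hstep k hk' ξ
    simp only [Fintype.card_fun, Fintype.card_bool, Fintype.card_fin, Nat.cast_pow,
      Nat.cast_ofNat] at hpair
    push_cast
    linarith [ih hk'.le]

lemma add_mul_le_mean_walkEnd (hn : 0 < n) (hp : 0 < p) (F : (Fin n → ℝ) → ℝ) {δ : ℝ}
    (hstep : ∀ (x : Fin n → ℝ) (j : Fin n) (t : ℝ), pnorm p x ≤ 1 / 2 → x j = 0 →
      t ^ 2 = 1 / (4 * (n : ℝ) ^ (2 / p)) →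
      2 * F x + 2 * δ ≤ F (x + Pi.single j t) + F (x - Pi.single j t)) :
    F 0 + n * δ ≤ (1 / 2 ^ n) * ∑ ξ, F (walkEnd n p ξ) := by
  have hsum := pow_mul_add_le_sum_partialWalk (p := p) F (δ := δ)
    (fun k hk ξ => hstep _ _ _ (pnorm_partialWalk_le hn hp k ξ) (partialWalk_apply_self hk ξ)
      (walkEnd_sq ξ _)) le_rfl
  simp only [partialWalk_self] at hsum
  rw [one_div, ← div_eq_inv_mul, le_div_iff₀ (by positivity), mul_comm]
  exact hsum

lemma mean_walkEnd_le (F : (Fin n → ℝ) → ℝ) {M : ℝ} (hF : ∀ ξ, F (walkEnd n p ξ) ≤ M) :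
    (1 / 2 ^ n) * ∑ ξ, F (walkEnd n p ξ) ≤ M := by
  have := Finset.sum_le_card_nsmul Finset.univ (fun ξ => F (walkEnd n p ξ)) M fun ξ _ => hF ξ
  simp only [Finset.card_univ, Fintype.card_fun, Fintype.card_bool, Fintype.card_fin,
    nsmul_eq_mul, Nat.cast_pow, Nat.cast_ofNat] at this
  rw [one_div, ← div_eq_inv_mul, div_le_iff₀ (by positivity), mul_comm]
  exact this

end partialWalk

lemma rpow_one_sub_div_le_mul_min {n : ℕ} (hn : 1 ≤ n) {p : ℝ} (hp : 0 < p) :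
    (n : ℝ) ^ (1 - 2 / p) / 64 ≤ n * min (1 / (64 * (n : ℝ) ^ (2 / p))) (1 / 16) := by
  have hn' : (1 : ℝ) ≤ n := by exact_mod_cast hn
  rcases min_cases (1 / (64 * (n : ℝ) ^ (2 / p))) (1 / 16 : ℝ) with ⟨hmin, _⟩ | ⟨hmin, _⟩
  · rw [hmin, Real.rpow_sub (by positivity), Real.rpow_one]
    exact le_of_eq (by ring)
  · have : (n : ℝ) ^ (1 - 2 / p) ≤ n := by
      simpa using Real.rpow_le_rpow_of_exponent_le hn' (by linarith [div_pos two_pos hp] :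
        1 - 2 / p ≤ 1)
    rw [hmin]
    linarith

theorem barrier_lower_bound_random_walk_general {n : ℕ} (hn : 1 ≤ n) (p : ℝ) (hp : 2 < p)
    (ν : ℝ)
    (Φ : (Fin n → ℝ) → ℝ) (gΦ : (Fin n → ℝ) → (Fin n → ℝ))
    (H : (Fin n → ℝ) → Matrix (Fin n) (Fin n) ℝ)
    -- Bregman divergence lower bound (Theorem parts 2,3 of the cited facts)
    (hBreg : ∀ x h : Fin n → ℝ, pnorm p x < 1 →
      Φ (x + h) - Φ x - gΦ x ⬝ᵥ h
        ≥ min ((1 / 4) * (h ⬝ᵥ (H x).mulVec h)) (1 / 16))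
    -- Dikin ellipse property: the open unit Dikin ellipse lies in the ℓ_p ball
    (hDikin : ∀ x h : Fin n → ℝ, pnorm p x < 1 →
      Real.sqrt (h ⬝ᵥ (H x).mulVec h) < 1 → pnorm p (x + h) ≤ 1)
    -- ν-self-concordance bound via the Minkowski gauge from the origin
    (hNu : ∀ y : Fin n → ℝ, pnorm p y ≤ 1 / 2 → Φ y - Φ 0 ≤ ν * Real.log 2) :
    ((1 / 2 ^ n) * ∑ ξ : Fin n → Bool, Φ (walkEnd n p ξ)) - Φ 0
        ≥ n * min (1 / (64 * (n : ℝ) ^ (2 / p : ℝ))) (1 / 16) ∧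
      ν ≥ (n : ℝ) ^ (1 - 2 / p : ℝ) / (64 * Real.log 2) := by
  have hp0 : 0 < p := by linarith
  set δ := min (1 / (64 * (n : ℝ) ^ (2 / p : ℝ))) (1 / 16)
  have hlower : Φ 0 + n * δ ≤ (1 / 2 ^ n) * ∑ ξ, Φ (walkEnd n p ξ) := by
    refine add_mul_le_mean_walkEnd hn hp0 Φ fun x j t hx hxj ht => ?_
    have hδ : δ ≤ min (t ^ 2 / 4) (1 / 16) := by
      refine min_le_min ?_ le_rfl
      rw [ht, div_div, mul_comm _ (4 : ℝ), ← mul_assoc]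
      gcongr
      norm_num
    linarith [two_mul_add_le_add_of_bregman_of_dikin hp0 hBreg hDikin
      (hx.trans_lt (by norm_num)) hxj t]
  have hupper : (1 / 2 ^ n) * ∑ ξ, Φ (walkEnd n p ξ) ≤ Φ 0 + ν * Real.log 2 :=
    mean_walkEnd_le Φ fun ξ => by
      linarith [hNu _ (by simpa using pnorm_partialWalk_le hn hp0 n ξ)]
  refine ⟨by linarith, ?_⟩
  rw [ge_iff_le, div_le_iff₀ (mul_pos (by norm_num) (Real.log_pos one_lt_two))]
  linarith [rpow_one_sub_div_le_mul_min hn hp0]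

theorem barrier_lower_bound_random_walk {n : ℕ} (hn : 1 ≤ n) (p : ℝ) (hp : 2 < p)
    (ν : ℝ) (hν : 0 ≤ ν)
    (Φ : (Fin n → ℝ) → ℝ) (gΦ : (Fin n → ℝ) → (Fin n → ℝ))
    (H : (Fin n → ℝ) → Matrix (Fin n) (Fin n) ℝ)
    -- Bregman divergence lower bound (Theorem parts 2,3 of the cited facts)
    (hBreg : ∀ x h : Fin n → ℝ, pnorm p x < 1 →
      Φ (x + h) - Φ x - gΦ x ⬝ᵥ h
        ≥ min ((1 / 4) * (h ⬝ᵥ (H x).mulVec h)) (1 / 16))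
    -- Dikin ellipse property: the open unit Dikin ellipse lies in the ℓ_p ball
    (hDikin : ∀ x h : Fin n → ℝ, pnorm p x < 1 →
      Real.sqrt (h ⬝ᵥ (H x).mulVec h) < 1 → pnorm p (x + h) ≤ 1)
    -- ν-self-concordance bound via the Minkowski gauge from the origin
    (hNu : ∀ y : Fin n → ℝ, pnorm p y ≤ 1 / 2 → Φ y - Φ 0 ≤ ν * Real.log 2) :
    ((1 / 2 ^ n) * ∑ ξ : Fin n → Bool, Φ (walkEnd n p ξ)) - Φ 0
        ≥ n * min (1 / (64 * (n : ℝ) ^ (2 / p : ℝ))) (1 / 16) ∧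
      ν ≥ (n : ℝ) ^ (1 - 2 / p : ℝ) / (64 * Real.log 2) :=
  barrier_lower_bound_random_walk_general hn p hp ν Φ gΦ H hBreg hDikin hNu
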